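/- Let v ≥ 0 be a continuous subharmonic function on ℂ vanishing on the real axis. Suppose there exist real numbers γ and d with γ > d > 1 such that v(γz) = d·v(z) for all z ∈ ℂ. Then v is identically zero. -/

import Mathlib

set_option maxHeartbeats 1000000

/-- `v` satisfies the sub-mean value inequality on `s` (a standard
characterization of subharmonicity for continuous functions). -/
def SubmeanOn (v : ℂ → ℝ) (s : Set ℂ) : Prop :=
  ∀ z ∈ s, ∀ r : ℝ, 0 < r → Metric.closedBall z r ⊆ s →
    v z ≤ (2 * Real.pi)⁻¹ *
      ∫ θ in (0 : ℝ)..(2 * Real.pi), v (z + r * Complex.exp (θ * Complex.I))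

open Complex Metric Real intervalIntegral

noncomputable section

lemma path_cont (z : ℂ) (r : ℝ) : Continuous fun θ : ℝ => z + r * Complex.exp (θ * I) := by
  continuity

lemma path_mem (z : ℂ) {r : ℝ} (hr : 0 < r) (θ : ℝ) :
    z + r * Complex.exp (θ * I) ∈ closedBall z r := by
  simp only [mem_closedBall, dist_eq_norm, add_sub_cancel_left]
  rw [norm_mul]
  simp only [Complex.norm_real]
  rw [Complex.norm_exp_ofReal_mul_I]
  simp [abs_of_pos hr]

lemma eps_le_helper {a b K : ℝ} (hK : 0 ≤ K) (h : ∀ δ : ℝ, 0 < δ → a ≤ b + δ * K) : a ≤ b := by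
  refine le_of_forall_pos_le_add fun ε hε => ?_
  have h1 := h (ε / (K + 1)) (by positivity)
  have : ε / (K + 1) * K ≤ ε := by
    rw [div_mul_eq_mul_div, div_le_iff₀ (by linarith)]
    nlinarith
  linarith

lemma integral_normSq_circle (z : ℂ) (r : ℝ) :
    (∫ θ in (0:ℝ)..(2*π), Complex.normSq (z + r * Complex.exp (θ * I)))
      = 2*π*(Complex.normSq z + r^2) := by
  have h : ∀ θ : ℝ, Complex.normSq (z + r * Complex.exp (θ * I))
      = (Complex.normSq z + r^2) + (2*r*z.re) * Real.cos θ + (2*r*z.im) * Real.sin θ := by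
    intro θ
    rw [Complex.exp_mul_I]
    have h1 := Real.sin_sq_add_cos_sq θ
    simp only [Complex.normSq_apply, Complex.add_re, Complex.add_im, Complex.mul_re,
      Complex.mul_im, Complex.ofReal_re, Complex.ofReal_im, Complex.I_re, Complex.I_im,
      Complex.cos_ofReal_re, Complex.cos_ofReal_im, Complex.sin_ofReal_re, Complex.sin_ofReal_im,
      Complex.add_re, Complex.add_im]
    nlinarith [h1]
  simp only [h]
  rw [intervalIntegral.integral_add (by apply Continuous.intervalIntegrable; continuity)
      (by apply Continuous.intervalIntegrable; continuity),
    intervalIntegral.integral_add (by apply Continuous.intervalIntegrable; continuity)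
      (by apply Continuous.intervalIntegrable; continuity),
    intervalIntegral.integral_const, intervalIntegral.integral_const_mul,
    intervalIntegral.integral_const_mul, integral_cos, integral_sin]
  simp [Real.sin_two_pi, Real.cos_two_pi]


lemma circle_mvp {f : ℂ → ℂ} {U : Set ℂ} (hU : IsOpen U) (hf : DifferentiableOn ℂ f U)
    {z : ℂ} {r : ℝ} (hr : 0 < r) (hball : closedBall z r ⊆ U) :
    (∫ θ in (0:ℝ)..(2*π), f (z + r * Complex.exp (θ * I))) = (2*π : ℝ) * f z := by
  have hc : ContinuousOn f (closedBall z r) := hf.continuousOn.mono hball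
  have hd : ∀ x ∈ ball z r \ (∅ : Set ℂ), DifferentiableAt ℂ f x := by
    intro x hx
    exact (hf x (hball (ball_subset_closedBall hx.1))).differentiableAt
      (hU.mem_nhds (hball (ball_subset_closedBall hx.1)))
  have h := Complex.circleIntegral_sub_center_inv_smul_of_differentiable_on_off_countable hr
    Set.countable_empty hc hd
  rw [circleIntegral] at h
  have heq : ∀ θ : ℝ, deriv (circleMap z r) θ • ((circleMap z r θ - z)⁻¹ • f (circleMap z r θ))
      = I * f (circleMap z r θ) := by
    intro θ
    rw [deriv_circleMap, circleMap_sub_center, smul_eq_mul, smul_eq_mul]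
    have hne : circleMap 0 r θ ≠ 0 := by
      simpa using circleMap_ne_center (c := (0:ℂ)) hr.ne' (θ := θ)
    field_simp
  simp only [heq] at h
  rw [intervalIntegral.integral_const_mul] at h
  have h2 : (∫ θ in (0:ℝ)..(2*π), f (circleMap z r θ)) = (2*π:ℝ) * f z := by
    apply mul_left_cancel₀ Complex.I_ne_zero
    rw [h, smul_eq_mul]
    push_cast
    ring
  have h3 : ∀ θ : ℝ, circleMap z r θ = z + r * Complex.exp (θ * I) := fun θ => rfl
  simp only [h3] at h2
  exact h2

lemma circle_mvp_parts {f : ℂ → ℂ} {U : Set ℂ} (hU : IsOpen U) (hf : DifferentiableOn ℂ f U)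
    {z : ℂ} {r : ℝ} (hr : 0 < r) (hball : closedBall z r ⊆ U) :
    ((∫ θ in (0:ℝ)..(2*π), (f (z + r * Complex.exp (θ * I))).im) = 2*π * (f z).im)
    ∧ ((∫ θ in (0:ℝ)..(2*π), (f (z + r * Complex.exp (θ * I))).re) = 2*π * (f z).re) := by
  have hfc : Continuous fun θ : ℝ => f (z + r * Complex.exp (θ * I)) :=
    hf.continuousOn.comp_continuous (path_cont z r) fun θ => hball (path_mem z hr θ)
  have hint : IntervalIntegrable (fun θ : ℝ => f (z + r * Complex.exp (θ * I)))
      MeasureTheory.volume 0 (2*π) := hfc.intervalIntegrable _ _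
  have h := circle_mvp hU hf hr hball
  constructor
  · have := (Complex.imCLM.intervalIntegral_comp_comm hint).symm
    simp only [Complex.imCLM_apply] at this
    rw [← this, h]
    simp
  · have := (Complex.reCLM.intervalIntegral_comp_comm hint).symm
    simp only [Complex.reCLM_apply] at this
    rw [← this, h]
    simp

lemma maxPrinciple {U : Set ℂ} (hU : IsOpen U) (hb : Bornology.IsBounded U)
    {u : ℂ → ℝ} (hc : ContinuousOn u (closure U))
    (hsm : ∀ z ∈ U, ∀ r : ℝ, 0 < r → closedBall z r ⊆ U →
      u z ≤ (2*π)⁻¹ * ∫ θ in (0:ℝ)..(2*π), u (z + r * Complex.exp (θ * I)))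
    {m : ℝ} (hm : ∀ z ∈ frontier U, u z ≤ m) :
    ∀ z ∈ closure U, u z ≤ m := by
  obtain ⟨C, hCpos, hC⟩ : ∃ C : ℝ, 0 ≤ C ∧ ∀ z ∈ closure U, Complex.normSq z ≤ C := by
    obtain ⟨C', hC'⟩ := hb.closure.subset_closedBall 0
    refine ⟨max (C'^2) 0, le_max_right _ _, fun z hz => le_trans ?_ (le_max_left _ _)⟩
    have h1 := hC' hz
    simp only [mem_closedBall, dist_zero_right] at h1
    have h2 : ‖z‖ ≤ C' := by exact h1
    rw [Complex.normSq_eq_norm_sq]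
    nlinarith [norm_nonneg z]
  intro z hz
  apply eps_le_helper hCpos
  intro ε hε
  set g : ℂ → ℝ := fun w => u w + ε * Complex.normSq w with hg
  have hgc : ContinuousOn g (closure U) :=
    hc.add ((continuous_const.mul Complex.continuous_normSq).continuousOn)
  have hK : IsCompact (closure U) := hb.isCompact_closure
  obtain ⟨z₀, hz₀K, hmax⟩ := hK.exists_isMaxOn ⟨z, hz⟩ hgc
  have hz₀U : z₀ ∉ U := by
    intro h₀
    rcases Metric.isOpen_iff.1 hU z₀ h₀ with ⟨ρ, hρ, hball⟩
    set r := ρ/2 with hrdef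
    have hrpos : 0 < r := by positivity
    have hcb : closedBall z₀ r ⊆ U :=
      (closedBall_subset_ball (by simp [hrdef]; linarith)).trans hball
    have h1 := hsm z₀ h₀ r hrpos hcb
    set p : ℝ → ℂ := fun θ => z₀ + r * Complex.exp (θ * I) with hp
    have hpmem : ∀ θ : ℝ, p θ ∈ closure U := fun θ => subset_closure (hcb (path_mem z₀ hrpos θ))
    have hup : Continuous fun θ : ℝ => u (p θ) :=
      hc.comp_continuous (path_cont z₀ r) hpmem
    have hnp : Continuous fun θ : ℝ => Complex.normSq (p θ) :=
      Complex.continuous_normSq.comp (path_cont z₀ r)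
    have h2 : (∫ θ in (0:ℝ)..(2*π), g (p θ)) ≤ ∫ θ in (0:ℝ)..(2*π), g z₀ := by
      apply intervalIntegral.integral_mono_on Real.two_pi_pos.le
      · exact (hup.add (continuous_const.mul hnp)).intervalIntegrable _ _
      · exact intervalIntegrable_const
      · intro θ _; exact hmax (hpmem θ)
    rw [intervalIntegral.integral_const, smul_eq_mul] at h2
    have h3 : (∫ θ in (0:ℝ)..(2*π), g (p θ))
        = (∫ θ in (0:ℝ)..(2*π), u (p θ)) + ε * (2*π*(Complex.normSq z₀ + r^2)) := by
      simp only [hg]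
      rw [intervalIntegral.integral_add (f := fun θ => u (p θ)) (g := fun θ => ε * Complex.normSq (p θ))
        (hup.intervalIntegrable _ _)
        ((continuous_const.mul hnp).intervalIntegrable _ _),
        intervalIntegral.integral_const_mul, integral_normSq_circle]
    have hπ := Real.two_pi_pos
    have h4 : 2*π * u z₀ ≤ ∫ θ in (0:ℝ)..(2*π), u (p θ) := by
      rw [inv_mul_eq_div, le_div_iff₀ hπ] at h1
      linarith
    have : (2*π) * (g z₀) + ε * (2*π*r^2) ≤ (2*π) * g z₀ := by
      simp only [hg] at h2 h3 ⊢
      nlinarith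
    nlinarith [mul_pos (mul_pos hε Real.two_pi_pos) (pow_pos hrpos 2)]
  have hz₀f : z₀ ∈ frontier U := by
    rw [frontier, hU.interior_eq]; exact ⟨hz₀K, hz₀U⟩
  have hgz : g z ≤ g z₀ := hmax hz
  have h5 : u z ≤ g z := by
    simp only [hg]
    nlinarith [Complex.normSq_nonneg z, hε.le]
  have h6 : g z₀ ≤ m + ε * C := by
    have := hm z₀ hz₀f
    have := hC z₀ hz₀K
    simp only [hg]
    nlinarith
  linarith

lemma w_ns {R : ℝ} {z : ℂ} (hz : z ≠ (R:ℂ)) : Complex.normSq ((R:ℂ) - z) ≠ 0 := by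
  rw [Ne, Complex.normSq_eq_zero, sub_eq_zero]
  exact fun h => hz h.symm

lemma w_im {R : ℝ} {z : ℂ} (hz : z ≠ (R:ℂ)) :
    (((R:ℂ)+z)/((R:ℂ)-z)).im = 2*R*z.im / Complex.normSq ((R:ℂ)-z) := by
  have hns := w_ns hz
  rw [Complex.div_im]
  simp only [Complex.add_im, Complex.sub_im, Complex.add_re, Complex.sub_re,
    Complex.ofReal_re, Complex.ofReal_im]
  field_simp
  ring

lemma w_re {R : ℝ} {z : ℂ} (hz : z ≠ (R:ℂ)) :
    (((R:ℂ)+z)/((R:ℂ)-z)).re = (R^2 - Complex.normSq z) / Complex.normSq ((R:ℂ)-z) := by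
  have hns := w_ns hz
  rw [Complex.div_re]
  simp only [Complex.add_im, Complex.sub_im, Complex.add_re, Complex.sub_re,
    Complex.ofReal_re, Complex.ofReal_im, Complex.normSq_apply]
  field_simp
  ring

lemma half_disk_bound {v : ℂ → ℝ} (hcont : Continuous v) (hpos : ∀ z, 0 ≤ v z)
    (hsub : SubmeanOn v Set.univ) (hreal : ∀ x : ℝ, v x = 0)
    {R c : ℝ} (hR : 0 < R) (hcb : ∀ z ∈ closedBall (0:ℂ) R, v z ≤ c)
    {z₀ : ℂ} (habs : ‖z₀‖ < R) (him : 0 < z₀.im) :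
    v z₀ ≤ c * (2/π) * (Complex.log (((R:ℂ) + z₀)/((R:ℂ) - z₀))).im := by
  have hπ := Real.pi_pos
  have hc0 : 0 ≤ c := le_trans (hpos 0) (hcb 0 (by simp [hR.le]))
  set L : ℂ → ℂ := fun z => Complex.log (((R:ℂ) + z)/((R:ℂ) - z)) with hL
  have hz₀R : z₀ ≠ (R:ℂ) := by
    intro h; rw [h] at him; simp at him
  have hz₀R' : z₀ ≠ -(R:ℂ) := by
    intro h; rw [h] at him; simp at him
  have habs1 : 0 < ‖(z₀ - R)‖ := by
    rw [norm_pos_iff]; exact sub_ne_zero.mpr hz₀R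
  have habs2 : 0 < ‖(z₀ + R)‖ := by
    rw [norm_pos_iff]
    intro h; exact hz₀R' (by linear_combination h)
  set K : ℝ := (Real.log (3*R) - Real.log (‖(z₀ - R)‖))
             + (Real.log (3*R) - Real.log (‖(z₀ + R)‖)) with hK
  have hlog1 : Real.log (‖(z₀ - R)‖) ≤ Real.log (3*R) := by
    apply Real.log_le_log habs1
    calc ‖(z₀ - R)‖ ≤ ‖z₀‖ + ‖(R:ℂ)‖ := by
          exact norm_sub_le _ _
      _ ≤ 3*R := by rw [Complex.norm_real, Real.norm_eq_abs, abs_of_pos hR]; linarith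
  have hlog2 : Real.log (‖(z₀ + R)‖) ≤ Real.log (3*R) := by
    apply Real.log_le_log habs2
    have h1 : ‖(z₀ + R)‖ ≤ ‖z₀‖ + ‖(R:ℂ)‖ := norm_add_le _ _
    rw [Complex.norm_real, Real.norm_eq_abs, abs_of_pos hR] at h1
    linarith
  have hK0 : 0 ≤ K := by rw [hK]; linarith
  have key : ∀ δ : ℝ, 0 < δ → v z₀ ≤ c * (2/π) * (L z₀).im + δ * K := by
    intro δ hδ
    set η : ℝ := min (min (‖(z₀ - R)‖/2) (‖(z₀ + R)‖/2))
        (3*R*Real.exp (-(c/δ))) with hη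
    have hηpos : 0 < η := lt_min (lt_min (by linarith) (by linarith)) (by positivity)
    set U : Set ℂ := {z | ‖z‖ < R} ∩ {z | 0 < z.im} with hUdef
    set U' : Set ℂ := U \ (closedBall (R:ℂ) η ∪ closedBall (-(R:ℂ)) η) with hU'def
    have hUopen : IsOpen U :=
      (isOpen_lt continuous_norm continuous_const).inter
        (isOpen_lt continuous_const Complex.continuous_im)
    have hU'open : IsOpen U' :=
      hUopen.sdiff (Metric.isClosed_closedBall.union Metric.isClosed_closedBall)
    have hbd : Bornology.IsBounded U' := by
      apply (Metric.isBounded_closedBall (x := (0:ℂ)) (r := R)).subset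
      intro z hz
      simp only [mem_closedBall, Complex.dist_eq, sub_zero]
      exact le_of_lt hz.1.1
    set S : Set ℂ := {z | ‖z‖ ≤ R} ∩ ({z | 0 ≤ z.im}
        ∩ ({z | η ≤ ‖(z - R)‖} ∩ {z | η ≤ ‖(z + R)‖})) with hSdef
    have hSclosed : IsClosed S := by
      refine (isClosed_le continuous_norm continuous_const).inter
        ((isClosed_le continuous_const Complex.continuous_im).inter
          ((isClosed_le continuous_const ?_).inter (isClosed_le continuous_const ?_)))
      · exact continuous_norm.comp (continuous_id.sub continuous_const)
      · exact continuous_norm.comp (continuous_id.add continuous_const)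
    have hU'S : U' ⊆ S := by
      rintro z ⟨⟨h1, h2⟩, h3⟩
      simp only [Set.mem_union, mem_closedBall, Complex.dist_eq, not_or, not_le] at h3
      have h3' : η ≤ ‖(z - R)‖ := le_of_lt h3.1
      have h3'' : η ≤ ‖(z + R)‖ := by
        have := h3.2
        rw [sub_neg_eq_add] at this
        exact le_of_lt this
      simp only [hSdef, Set.mem_inter_iff, Set.mem_setOf_eq]
      exact ⟨le_of_lt h1, le_of_lt h2, h3', h3''⟩
    have hclS : closure U' ⊆ S := closure_minimal hU'S hSclosed
    have hz₀U' : z₀ ∈ U' := by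
      refine ⟨⟨habs, him⟩, ?_⟩
      simp only [Set.mem_union, mem_closedBall, Complex.dist_eq, not_or, not_le]
      constructor
      · calc η ≤ ‖(z₀ - R)‖/2 := le_trans (min_le_left _ _) (min_le_left _ _)
          _ < ‖(z₀ - R)‖ := by linarith
      · rw [sub_neg_eq_add]
        calc η ≤ ‖(z₀ + R)‖/2 := le_trans (min_le_left _ _) (min_le_right _ _)
          _ < ‖(z₀ + R)‖ := by linarith
    have hSmem : ∀ z ∈ S, ‖z‖ ≤ R ∧ 0 ≤ z.im ∧ η ≤ ‖(z - R)‖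
        ∧ η ≤ ‖(z + R)‖ := by
      intro z hz
      simp only [hSdef, Set.mem_inter_iff, Set.mem_setOf_eq] at hz
      exact ⟨hz.1, hz.2.1, hz.2.2.1, hz.2.2.2⟩
    have hSneR : ∀ z ∈ S, z ≠ (R:ℂ) := by
      intro z hz h
      have h3 := (hSmem z hz).2.2.1
      rw [h, sub_self] at h3
      simp at h3
      linarith
    have hSneR' : ∀ z ∈ S, z ≠ -(R:ℂ) := by
      intro z hz h
      have h3 := (hSmem z hz).2.2.2
      rw [h, neg_add_cancel] at h3
      simp at h3
      linarith
    have hS_im_pos : ∀ z ∈ S, ‖z‖ = R → 0 < z.im := by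
      intro z hz hzR
      rcases lt_or_eq_of_le (hSmem z hz).2.1 with h | h
      · exact h
      · exfalso
        have hz' : z = (z.re : ℂ) := Complex.ext (by simp) (by simp [← h])
        rw [hz', Complex.norm_real, Real.norm_eq_abs] at hzR
        rcases abs_eq hR.le |>.1 hzR with h1 | h1
        · exact hSneR z hz (by rw [hz', h1])
        · exact hSneR' z hz (by rw [hz', h1]; push_cast; ring)
    have hns_pos : ∀ z ∈ S, 0 < Complex.normSq ((R:ℂ) - z) := by
      intro z hz
      rw [Complex.normSq_pos, sub_ne_zero]
      exact fun h => hSneR z hz h.symm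
    have hImL_nonneg : ∀ z ∈ S, 0 ≤ (L z).im := by
      intro z hz
      rw [hL, Complex.log_im, Complex.arg_nonneg_iff, w_im (hSneR z hz)]
      exact div_nonneg (by nlinarith [(hSmem z hz).2.1, hR.le]) (Complex.normSq_nonneg _)
    have hvS : ∀ z ∈ S, v z ≤ c := by
      intro z hz
      exact hcb z (by simp only [mem_closedBall, Complex.dist_eq, sub_zero]; exact (hSmem z hz).1)
    have hlogS1 : ∀ z ∈ S, Real.log (‖(z - R)‖) ≤ Real.log (3*R) := by
      intro z hz
      apply Real.log_le_log (lt_of_lt_of_le hηpos (hSmem z hz).2.2.1)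
      have h1 : ‖(z - R)‖ ≤ ‖z‖ + ‖(R:ℂ)‖ := by
        simpa using norm_sub_le z (R:ℂ)
      rw [Complex.norm_real, Real.norm_eq_abs, abs_of_pos hR] at h1
      linarith [(hSmem z hz).1]
    have hlogS2 : ∀ z ∈ S, Real.log (‖(z + R)‖) ≤ Real.log (3*R) := by
      intro z hz
      apply Real.log_le_log (lt_of_lt_of_le hηpos (hSmem z hz).2.2.2)
      have h1 : ‖(z + R)‖ ≤ ‖z‖ + ‖(R:ℂ)‖ := norm_add_le _ _
      rw [Complex.norm_real, Real.norm_eq_abs, abs_of_pos hR] at h1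
      linarith [(hSmem z hz).1]
    have hSslit : ∀ z ∈ S, ((R:ℂ)+z)/((R:ℂ)-z) ∈ Complex.slitPlane := by
      intro z hz
      rw [Complex.mem_slitPlane_iff]
      rcases lt_or_eq_of_le (hSmem z hz).1 with h | h
      · left
        rw [w_re (hSneR z hz)]
        apply div_pos _ (hns_pos z hz)
        have := Complex.sq_norm z
        nlinarith [norm_nonneg z]
      · right
        rw [w_im (hSneR z hz)]
        have himz := hS_im_pos z hz h
        exact ne_of_gt (div_pos (by nlinarith) (hns_pos z hz))
    set u : ℂ → ℝ := fun z => v z - c*(2/π)*(L z).im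
        - δ*(Real.log (3*R) - Real.log (‖(z - R)‖))
        - δ*(Real.log (3*R) - Real.log (‖(z + R)‖)) with hu
    have hcontu : ContinuousOn u (closure U') := by
      apply ContinuousOn.mono _ hclS
      intro z hz
      apply ContinuousAt.continuousWithinAt
      have hden : (R:ℂ) - z ≠ 0 := by
        rw [sub_ne_zero]; exact fun h => hSneR z hz h.symm
      have hgc : ContinuousAt (fun x : ℂ => ((R:ℂ)+x)/((R:ℂ)-x)) z :=
        ContinuousAt.div (continuousAt_const.add continuousAt_id)
          (continuousAt_const.sub continuousAt_id) hden
      have hlogc : ContinuousAt Complex.log (((R:ℂ)+z)/((R:ℂ)-z)) :=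
        continuousAt_clog (hSslit z hz)
      have h0 : ContinuousAt (fun x : ℂ => Complex.log (((R:ℂ)+x)/((R:ℂ)-x))) z :=
        ContinuousAt.comp (g := Complex.log)
          (f := fun x : ℂ => ((R:ℂ)+x)/((R:ℂ)-x)) hlogc hgc
      have h1 : ContinuousAt (fun x : ℂ => (Complex.log (((R:ℂ)+x)/((R:ℂ)-x))).im) z :=
        Complex.continuous_im.continuousAt.comp h0
      have hin2 : ContinuousAt (fun x : ℂ => ‖(x - (R:ℂ))‖) z :=
        (continuous_norm.comp (continuous_id.sub continuous_const)).continuousAt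
      have hin3 : ContinuousAt (fun x : ℂ => ‖(x + (R:ℂ))‖) z :=
        (continuous_norm.comp (continuous_id.add continuous_const)).continuousAt
      have h2 : ContinuousAt (fun x : ℂ => Real.log (‖(x - (R:ℂ))‖)) z :=
        ContinuousAt.comp (g := Real.log) (f := fun x : ℂ => ‖(x - (R:ℂ))‖)
          (Real.continuousAt_log (ne_of_gt (lt_of_lt_of_le hηpos (hSmem z hz).2.2.1))) hin2
      have h3 : ContinuousAt (fun x : ℂ => Real.log (‖(x + (R:ℂ))‖)) z :=
        ContinuousAt.comp (g := Real.log) (f := fun x : ℂ => ‖(x + (R:ℂ))‖)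
          (Real.continuousAt_log (ne_of_gt (lt_of_lt_of_le hηpos (hSmem z hz).2.2.2))) hin3
      rw [hu, hL]
      exact ((hcont.continuousAt.sub (continuousAt_const.mul h1)).sub
        (continuousAt_const.mul (continuousAt_const.sub h2))).sub
        (continuousAt_const.mul (continuousAt_const.sub h3))
    have hfront : ∀ z ∈ frontier U', u z ≤ 0 := by
      intro z hzf
      have hzS : z ∈ S := hclS (frontier_subset_closure hzf)
      have hznU' : z ∉ U' := by
        rw [frontier, hU'open.interior_eq] at hzf
        exact hzf.2
      obtain ⟨hzabs, hzim, hz1, hz2⟩ := hSmem z hzS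
      have hvz : v z ≤ c := hvS z hzS
      have hIm : 0 ≤ c*(2/π)*(L z).im :=
        mul_nonneg (by positivity) (hImL_nonneg z hzS)
      have hb1 : 0 ≤ δ*(Real.log (3*R) - Real.log (‖(z - R)‖)) :=
        mul_nonneg hδ.le (by linarith [hlogS1 z hzS])
      have hb2 : 0 ≤ δ*(Real.log (3*R) - Real.log (‖(z + R)‖)) :=
        mul_nonneg hδ.le (by linarith [hlogS2 z hzS])
      have hηbar : c ≤ δ * (Real.log (3*R) - Real.log η) := by
        have h1 : η ≤ 3*R*Real.exp (-(c/δ)) := min_le_right _ _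
        have h2 : Real.log η ≤ Real.log (3*R) - c/δ := by
          have := Real.log_le_log hηpos h1
          rwa [Real.log_mul (by positivity) (Real.exp_ne_zero _), Real.log_exp] at this
        have h3 : c/δ ≤ Real.log (3*R) - Real.log η := by linarith
        calc c = δ * (c/δ) := by field_simp
          _ ≤ δ * (Real.log (3*R) - Real.log η) := by
              exact mul_le_mul_of_nonneg_left h3 hδ.le
      by_cases hsp1 : z ∈ closedBall (R:ℂ) η
      · have heq : ‖(z - R)‖ = η := by
          apply le_antisymm _ hz1
          simpa [Complex.dist_eq] using hsp1
        simp only [hu]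
        rw [heq]
        linarith
      · by_cases hsp2 : z ∈ closedBall (-(R:ℂ)) η
        · have heq : ‖(z + R)‖ = η := by
            apply le_antisymm _ hz2
            have := hsp2
            simp only [mem_closedBall, Complex.dist_eq, sub_neg_eq_add] at this
            exact this
          simp only [hu]
          rw [heq]
          linarith
        · have hzU : z ∉ U := by
            intro h
            exact hznU' ⟨h, by simp only [Set.mem_union, not_or]; exact ⟨hsp1, hsp2⟩⟩
          simp only [hUdef, Set.mem_inter_iff, Set.mem_setOf_eq, not_and, not_lt] at hzU
          by_cases him0 : z.im ≤ 0
          · have h0 : z.im = 0 := le_antisymm him0 hzim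
            have hz' : z = (z.re : ℂ) := Complex.ext (by simp) (by simp [h0])
            have hv0 : v z = 0 := by rw [hz']; exact hreal z.re
            simp only [hu]
            linarith
          · push_neg at him0
            have habsz : ‖z‖ = R := by
              apply le_antisymm hzabs
              by_contra hlt
              push_neg at hlt
              exact absurd (hzU hlt) (not_le.mpr him0)
            have hIm2 : (L z).im = π/2 := by
              rw [hL, Complex.log_im, Complex.arg_eq_pi_div_two_iff]
              constructor
              · rw [w_re (hSneR z hzS)]
                have := Complex.sq_norm z
                rw [habsz] at this
                rw [← this]
                simp
              · rw [w_im (hSneR z hzS)]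
                exact div_pos (by nlinarith) (hns_pos z hzS)
            have : c*(2/π)*(L z).im = c := by
              rw [hIm2]; field_simp
            simp only [hu] at *
            linarith
    have hsm : ∀ z ∈ U', ∀ r : ℝ, 0 < r → closedBall z r ⊆ U' →
        u z ≤ (2*π)⁻¹ * ∫ θ in (0:ℝ)..(2*π), u (z + r * Complex.exp (θ * I)) := by
      intro z hzU' r hr hball
      have hUim : ∀ w ∈ U', 0 < w.im := fun w hw => hw.1.2
      have hdL : DifferentiableOn ℂ L U' := by
        intro w hw
        have hwS : w ∈ S := hU'S hw
        have hden : (R:ℂ) - w ≠ 0 := by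
          rw [sub_ne_zero]; exact fun h => hSneR w hwS h.symm
        have hgd : DifferentiableAt ℂ (fun x : ℂ => ((R:ℂ)+x)/((R:ℂ)-x)) w :=
          DifferentiableAt.div ((differentiableAt_const _).add differentiableAt_id)
            ((differentiableAt_const _).sub differentiableAt_id) hden
        have hld : DifferentiableAt ℂ Complex.log (((R:ℂ)+w)/((R:ℂ)-w)) :=
          Complex.differentiableAt_log (hSslit w hwS)
        have := DifferentiableAt.comp (g := Complex.log)
          (f := fun x : ℂ => ((R:ℂ)+x)/((R:ℂ)-x)) w hld hgd
        rw [hL]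
        exact this.differentiableWithinAt
      have hd2 : DifferentiableOn ℂ (fun w => Complex.log (w - (R:ℂ))) U' := by
        intro w hw
        have hld : DifferentiableAt ℂ Complex.log (w - (R:ℂ)) := by
          apply Complex.differentiableAt_log
          rw [Complex.mem_slitPlane_iff]
          right
          simp only [Complex.sub_im, Complex.ofReal_im, sub_zero]
          exact ne_of_gt (hUim w hw)
        exact (DifferentiableAt.comp (g := Complex.log)
          (f := fun x : ℂ => x - (R:ℂ)) w hld
          (differentiableAt_id.sub (differentiableAt_const _))).differentiableWithinAt
      have hd3 : DifferentiableOn ℂ (fun w => Complex.log (w + (R:ℂ))) U' := by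
        intro w hw
        have hld : DifferentiableAt ℂ Complex.log (w + (R:ℂ)) := by
          apply Complex.differentiableAt_log
          rw [Complex.mem_slitPlane_iff]
          right
          simp only [Complex.add_im, Complex.ofReal_im, add_zero]
          exact ne_of_gt (hUim w hw)
        exact (DifferentiableAt.comp (g := Complex.log)
          (f := fun x : ℂ => x + (R:ℂ)) w hld
          (differentiableAt_id.add (differentiableAt_const _))).differentiableWithinAt
      have h1 := (circle_mvp_parts hU'open hdL hr hball).1
      have h2 := (circle_mvp_parts hU'open hd2 hr hball).2
      have h3 := (circle_mvp_parts hU'open hd3 hr hball).2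
      set p : ℝ → ℂ := fun θ => z + r * Complex.exp (θ * I) with hp
      have hpmem : ∀ θ : ℝ, p θ ∈ U' := fun θ => hball (path_mem z hr θ)
      have hpc := path_cont z r
      have hcLp : Continuous fun θ : ℝ => (L (p θ)).im :=
        Complex.continuous_im.comp (hdL.continuousOn.comp_continuous hpc hpmem)
      have hc2p : Continuous fun θ : ℝ => (Complex.log (p θ - (R:ℂ))).re :=
        Complex.continuous_re.comp (hd2.continuousOn.comp_continuous hpc hpmem)
      have hc3p : Continuous fun θ : ℝ => (Complex.log (p θ + (R:ℂ))).re :=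
        Complex.continuous_re.comp (hd3.continuousOn.comp_continuous hpc hpmem)
      have hvp : Continuous fun θ : ℝ => v (p θ) := hcont.comp hpc
      have hrepr : ∀ w : ℂ, u w = v w - c*(2/π)*(L w).im
          - δ*(Real.log (3*R) - (Complex.log (w - (R:ℂ))).re)
          - δ*(Real.log (3*R) - (Complex.log (w + (R:ℂ))).re) := by
        intro w
        simp only [hu, Complex.log_re]
      have e1 : (∫ θ in (0:ℝ)..(2*π), c*(2/π)*(L (p θ)).im)
          = 2*π*(c*(2/π)*(L z).im) := by
        rw [intervalIntegral.integral_const_mul, h1]; ring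
      have e2 : (∫ θ in (0:ℝ)..(2*π), δ*(Real.log (3*R) - (Complex.log (p θ - (R:ℂ))).re))
          = 2*π*(δ*(Real.log (3*R) - (Complex.log (z - (R:ℂ))).re)) := by
        rw [intervalIntegral.integral_const_mul,
          intervalIntegral.integral_sub intervalIntegrable_const (hc2p.intervalIntegrable _ _),
          intervalIntegral.integral_const, h2]
        simp
        ring
      have e3 : (∫ θ in (0:ℝ)..(2*π), δ*(Real.log (3*R) - (Complex.log (p θ + (R:ℂ))).re))
          = 2*π*(δ*(Real.log (3*R) - (Complex.log (z + (R:ℂ))).re)) := by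
        rw [intervalIntegral.integral_const_mul,
          intervalIntegral.integral_sub intervalIntegrable_const (hc3p.intervalIntegrable _ _),
          intervalIntegral.integral_const, h3]
        simp
        ring
      have hsplit : (∫ θ in (0:ℝ)..(2*π), u (p θ))
          = (∫ θ in (0:ℝ)..(2*π), v (p θ))
            - 2*π*(c*(2/π)*(L z).im)
            - 2*π*(δ*(Real.log (3*R) - (Complex.log (z - (R:ℂ))).re))
            - 2*π*(δ*(Real.log (3*R) - (Complex.log (z + (R:ℂ))).re)) := by
        have hA : IntervalIntegrable (fun θ : ℝ => v (p θ)) MeasureTheory.volume 0 (2*π) :=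
          hvp.intervalIntegrable _ _
        have hB : IntervalIntegrable (fun θ : ℝ => c*(2/π)*(L (p θ)).im)
            MeasureTheory.volume 0 (2*π) := (continuous_const.mul hcLp).intervalIntegrable _ _
        have hC : IntervalIntegrable
            (fun θ : ℝ => δ*(Real.log (3*R) - (Complex.log (p θ - (R:ℂ))).re))
            MeasureTheory.volume 0 (2*π) :=
          (continuous_const.mul (continuous_const.sub hc2p)).intervalIntegrable _ _
        have hD : IntervalIntegrable
            (fun θ : ℝ => δ*(Real.log (3*R) - (Complex.log (p θ + (R:ℂ))).re))
            MeasureTheory.volume 0 (2*π) :=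
          (continuous_const.mul (continuous_const.sub hc3p)).intervalIntegrable _ _
        simp only [hrepr]
        rw [intervalIntegral.integral_sub ((hA.sub hB).sub hC) hD,
          intervalIntegral.integral_sub (hA.sub hB) hC,
          intervalIntegral.integral_sub hA hB, e1, e2, e3]
      have hv := hsub z (Set.mem_univ z) r hr (Set.subset_univ _)
      have h2π : (2*π : ℝ) ≠ 0 := Real.two_pi_pos.ne'
      rw [hsplit, hrepr z]
      have hrw : (2*π)⁻¹ * ((∫ θ in (0:ℝ)..(2*π), v (p θ))
            - 2*π*(c*(2/π)*(L z).im)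
            - 2*π*(δ*(Real.log (3*R) - (Complex.log (z - (R:ℂ))).re))
            - 2*π*(δ*(Real.log (3*R) - (Complex.log (z + (R:ℂ))).re)))
          = (2*π)⁻¹ * (∫ θ in (0:ℝ)..(2*π), v (p θ))
            - (c*(2/π)*(L z).im)
            - (δ*(Real.log (3*R) - (Complex.log (z - (R:ℂ))).re))
            - (δ*(Real.log (3*R) - (Complex.log (z + (R:ℂ))).re)) := by
        field_simp
      rw [hrw]
      have : v z ≤ (2*π)⁻¹ * ∫ θ in (0:ℝ)..(2*π), v (p θ) := hv
      linarith
    have hmp := maxPrinciple hU'open hbd hcontu hsm hfront z₀ (subset_closure hz₀U')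
    simp only [hu] at hmp
    rw [hK]
    have hlr1 : (Complex.log (z₀ - (R:ℂ))).re = Real.log (‖(z₀ - R)‖) :=
      Complex.log_re _
    linarith
  exact eps_le_helper hK0 key

lemma vanish_upper {v : ℂ → ℝ} (hcont : Continuous v) (hpos : ∀ z, 0 ≤ v z)
    (hsub : SubmeanOn v Set.univ) (hreal : ∀ x : ℝ, v x = 0)
    {γ d : ℝ} (hγd : d < γ) (hd : 1 < d)
    (hhom : ∀ z : ℂ, v ((γ : ℂ) * z) = d * v z)
    {z₀ : ℂ} (him : 0 < z₀.im) : v z₀ = 0 := by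
  have hπ := Real.pi_pos
  have hγ : 1 < γ := hd.trans hγd
  have hγ0 : (0:ℝ) < γ := by linarith
  have hd0 : (0:ℝ) < d := by linarith
  obtain ⟨B, hB0, hB⟩ : ∃ B, 0 ≤ B ∧ ∀ z ∈ closedBall (0:ℂ) 1, v z ≤ B := by
    obtain ⟨w, hwmem, hw⟩ := (isCompact_closedBall (0:ℂ) 1).exists_isMaxOn
      ⟨0, by simp⟩ hcont.continuousOn
    exact ⟨v w, hpos w, fun z hz => hw hz⟩
  have hscale : ∀ n : ℕ, ∀ z : ℂ, v ((((γ:ℝ)^n : ℝ) : ℂ) * z) = d^n * v z := by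
    intro n
    induction n with
    | zero => simp
    | succ n ih =>
      intro z
      have heq : (((γ^(n+1) : ℝ)) : ℂ) * z = (γ:ℂ) * ((((γ^n : ℝ)) : ℂ) * z) := by
        push_cast; ring
      rw [heq, hhom, ih]; ring
  have hsup : ∀ n : ℕ, ∀ z ∈ closedBall (0:ℂ) (γ^n), v z ≤ d^n * B := by
    intro n z hz
    have hgn : (((γ^n : ℝ)) : ℂ) ≠ 0 := Complex.ofReal_ne_zero.mpr (by positivity)
    have hw : z / (((γ^n:ℝ)) : ℂ) ∈ closedBall (0:ℂ) 1 := by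
      simp only [mem_closedBall, Complex.dist_eq, sub_zero] at hz ⊢
      rw [norm_div, Complex.norm_real, Real.norm_eq_abs, abs_of_pos (by positivity)]
      rw [div_le_one (by positivity)]
      exact hz
    have hzz : (((γ^n:ℝ)) : ℂ) * (z / (((γ^n:ℝ)) : ℂ)) = z := by
      have hγc : (γ:ℂ) ≠ 0 := Complex.ofReal_ne_zero.mpr hγ0.ne'
      push_cast
      field_simp
    have h1 := hscale n (z / (((γ^n:ℝ)) : ℂ))
    rw [hzz] at h1
    rw [h1]
    exact mul_le_mul_of_nonneg_left (hB _ hw) (by positivity)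
  have key : ∀ n : ℕ, ‖z₀‖ < γ^n → 2 * Complex.normSq z₀ ≤ γ^n * γ^n →
      v z₀ ≤ (8*B*z₀.im/π) * (d/γ)^n := by
    intro n h1 h2
    set R := (γ:ℝ)^n with hRdef
    have hRpos : 0 < R := by positivity
    have hb := half_disk_bound hcont hpos hsub hreal hRpos (hsup n) h1 him
    set w := ((R:ℂ) + z₀)/((R:ℂ) - z₀) with hw
    have hz₀R : z₀ ≠ (R:ℂ) := by
      intro h; rw [h] at him; simp at him
    have hns := w_ns hz₀R
    have hnspos : 0 < Complex.normSq ((R:ℂ) - z₀) :=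
      lt_of_le_of_ne (Complex.normSq_nonneg _) (Ne.symm hns)
    have hnum : 0 < R^2 - Complex.normSq z₀ := by
      have := Complex.sq_norm z₀
      nlinarith [norm_nonneg z₀]
    have hrepos : 0 < w.re := by
      rw [hw, w_re hz₀R]; exact div_pos hnum hnspos
    have himw : 0 ≤ w.im := by
      rw [hw, w_im hz₀R]
      exact div_nonneg (by positivity) (Complex.normSq_nonneg _)
    have harg0 : 0 ≤ Complex.arg w := Complex.arg_nonneg_iff.2 himw
    have harglt : Complex.arg w < π/2 := Complex.arg_lt_pi_div_two_iff.2 (Or.inl hrepos)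
    have hargle : Complex.arg w ≤ w.im / w.re := by
      calc Complex.arg w ≤ Real.tan (Complex.arg w) := Real.le_tan harg0 harglt
        _ = w.im / w.re := Complex.tan_arg w
    have hiw : w.im / w.re = 2*R*z₀.im/(R^2 - Complex.normSq z₀) := by
      rw [hw, w_im hz₀R, w_re hz₀R]
      field_simp
    have hbound : 2*R*z₀.im/(R^2 - Complex.normSq z₀) ≤ 4*z₀.im/R := by
      rw [div_le_div_iff₀ hnum hRpos]
      nlinarith [Complex.normSq_nonneg z₀]
    have hImlog : (Complex.log w).im = Complex.arg w := Complex.log_im w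
    have hchain : v z₀ ≤ (d^n * B) * (2/π) * (4*z₀.im/R) := by
      have h3 : (d^n*B) * (2/π) * (Complex.log w).im ≤ (d^n*B) * (2/π) * (4*z₀.im/R) := by
        apply mul_le_mul_of_nonneg_left _ (by positivity)
        rw [hImlog]
        calc Complex.arg w ≤ w.im / w.re := hargle
          _ = 2*R*z₀.im/(R^2 - Complex.normSq z₀) := hiw
          _ ≤ 4*z₀.im/R := hbound
      exact le_trans hb h3
    calc v z₀ ≤ (d^n * B) * (2/π) * (4*z₀.im/R) := hchain
      _ = (8*B*z₀.im/π) * (d/γ)^n := by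
        rw [hRdef, div_pow]
        field_simp
        ring
  have htend : Filter.Tendsto (fun n : ℕ => (8*B*z₀.im/π) * (d/γ)^n)
      Filter.atTop (nhds 0) := by
    have h01 : (0:ℝ) ≤ d/γ := by positivity
    have h11 : d/γ < 1 := by rw [div_lt_one hγ0]; exact hγd
    simpa using (tendsto_pow_atTop_nhds_zero_of_lt_one h01 h11).const_mul (8*B*z₀.im/π)
  have hant := tendsto_pow_atTop_atTop_of_one_lt hγ
  have hev : ∀ᶠ n in Filter.atTop, v z₀ ≤ (8*B*z₀.im/π)*(d/γ)^n := by
    filter_upwards [hant.eventually_gt_atTop (‖z₀‖),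
      hant.eventually_ge_atTop (2*Complex.normSq z₀)] with n hn1 hn2
    apply key n hn1
    have h1 : (1:ℝ) ≤ γ^n := one_le_pow₀ hγ.le
    nlinarith
  exact le_antisymm (ge_of_tendsto htend hev) (hpos z₀)

lemma submean_conj {v : ℂ → ℝ} (hsub : SubmeanOn v Set.univ) :
    SubmeanOn (fun z => v ((starRingEnd ℂ) z)) Set.univ := by
  intro z _ r hr _
  have h := hsub ((starRingEnd ℂ) z) (Set.mem_univ _) r hr (Set.subset_univ _)
  set f : ℝ → ℝ := fun θ => v ((starRingEnd ℂ) z + r * Complex.exp (θ * I)) with hf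
  have hper : Function.Periodic f (2*π) := by
    intro θ
    simp only [hf]
    congr 2
    push_cast
    rw [add_mul, Complex.exp_add]
    simp [Complex.exp_two_pi_mul_I]
  have hcomp : ∀ θ : ℝ, v ((starRingEnd ℂ) (z + r * Complex.exp (θ * I))) = f (-θ) := by
    intro θ
    simp only [hf]
    congr 1
    rw [map_add, map_mul, ← Complex.exp_conj]
    congr 2
    · exact Complex.conj_ofReal r
    · rw [map_mul, Complex.conj_ofReal, Complex.conj_I]
      push_cast
      ring
  have heq : (∫ θ in (0:ℝ)..(2*π), v ((starRingEnd ℂ) (z + r * Complex.exp (θ * I))))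
      = ∫ θ in (0:ℝ)..(2*π), f θ := by
    simp only [hcomp]
    rw [intervalIntegral.integral_comp_neg]
    have := hper.intervalIntegral_add_eq (-(2*π)) 0
    simpa using this
  calc v ((starRingEnd ℂ) z) ≤ (2*π)⁻¹ * ∫ θ in (0:ℝ)..(2*π), f θ := h
    _ = (2*π)⁻¹ * ∫ θ in (0:ℝ)..(2*π), v ((starRingEnd ℂ) (z + r * Complex.exp (θ * I))) := by
        rw [heq]

theorem stmt_7 (v : ℂ → ℝ) (hcont : Continuous v) (hpos : ∀ z, 0 ≤ v z)
    (hsub : SubmeanOn v Set.univ) (hreal : ∀ x : ℝ, v x = 0)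
    (γ d : ℝ) (hγd : d < γ) (hd : 1 < d)
    (hhom : ∀ z : ℂ, v ((γ : ℂ) * z) = d * v z) :
    ∀ z : ℂ, v z = 0 := by
  intro z
  rcases lt_trichotomy z.im 0 with h | h | h
  · set v' : ℂ → ℝ := fun w => v ((starRingEnd ℂ) w) with hv'
    have hcont' : Continuous v' := hcont.comp Complex.continuous_conj
    have hpos' : ∀ w, 0 ≤ v' w := fun w => hpos _
    have hsub' : SubmeanOn v' Set.univ := submean_conj hsub
    have hreal' : ∀ x : ℝ, v' x = 0 := by
      intro x
      simp only [hv', Complex.conj_ofReal]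
      exact hreal x
    have hhom' : ∀ w : ℂ, v' ((γ:ℂ) * w) = d * v' w := by
      intro w
      simp only [hv', map_mul, Complex.conj_ofReal]
      exact hhom _
    have him : 0 < ((starRingEnd ℂ) z).im := by
      rw [Complex.conj_im]; linarith
    have := vanish_upper hcont' hpos' hsub' hreal' hγd hd hhom' him
    simp only [hv', Complex.conj_conj] at this
    exact this
  · have hz : z = (z.re : ℂ) := Complex.ext (by simp) (by simp [h])
    rw [hz]
    exact hreal z.re
  · exact vanish_upper hcont hpos hsub hreal hγd hd hhom h
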